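/- Let (X, 𝓑, μ) be a standard Borel space with a nonatomic Borel probability measure μ, and let T be an aperiodic μ-preserving Borel automorphism of X. Then for every integer n ≥ 1 and every ε > 0 there exists a Borel set A ⊆ X such that the sets A, T(A), …, T^{n-1}(A) are pairwise disjoint and μ(X ∖ (A ∪ T(A) ∪ ⋯ ∪ T^{n-1}(A))) < ε. -/

import Mathlib

/-!
Pick `N` large and a Borel marker set `B` whose points do not return to `B` before time `N`,
met by almost every orbit. Countably many Borel sets separate points, so the aperiodic points are
covered by countably many sets without early returns; keeping from the `k`-th one only the points
whose orbit misses the earlier ones gives `B`, which meets every aperiodic orbit. The preimages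
`T⁻ⁱ B`, `i < N`, are disjoint, so `μ B ≤ 1 / N`, and by Poincaré recurrence almost every point
visits `B` in the future. The base of the tower consists of the points whose first visit to `B`
happens at a positive multiple of `n`; the first `n` levels then cover everything except the
points that visit `B` within `n` steps, a set of measure at most `n μ B ≤ n / N`. Since `Tⁱ A` is
the preimage of `A` under the `i`-th iterate of `T⁻¹`, all of this is applied to `T⁻¹`.
-/

open MeasureTheory Set Function Filter
open scoped ENNReal

namespace Rokhlin

variable {X : Type*} {f : X → X} {B s : Set X} {N n d : ℕ} {x : X}

def NoReturnBefore (f : X → X) (N : ℕ) (s : Set X) : Prop :=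
  ∀ x ∈ s, ∀ i, 0 < i → i < N → f^[i] x ∉ s

theorem NoReturnBefore.pairwiseDisjoint_preimage_iterate (hs : NoReturnBefore f N s) :
    (↑(Finset.range N) : Set ℕ).PairwiseDisjoint fun i => f^[i] ⁻¹' s := by
  have key : ∀ i j, i < j → j < N → Disjoint (f^[i] ⁻¹' s) (f^[j] ⁻¹' s) := by
    refine fun i j hij hjN => disjoint_left.2 fun x hxi hxj =>
      hs _ hxi (j - i) (by omega) (by omega) ?_
    rwa [← iterate_add_apply, Nat.sub_add_cancel hij.le]
  intro i hi j hj hij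
  simp only [Finset.coe_range, mem_Iio] at hi hj
  rcases Nat.lt_or_gt_of_ne hij with h | h
  · exact key i j h hj
  · exact (key j i h hi).symm

theorem NoReturnBefore.natCast_mul_measure_le {_ : MeasurableSpace X} {μ : Measure X}
    (hf : MeasurePreserving f μ μ) (hs : MeasurableSet s) (h : NoReturnBefore f N s) :
    N * μ s ≤ μ univ :=
  calc (N : ℝ≥0∞) * μ s = ∑ i ∈ Finset.range N, μ (f^[i] ⁻¹' s) := by
        simp [(hf.iterate _).measure_preimage hs.nullMeasurableSet]
    _ = μ (⋃ i ∈ Finset.range N, f^[i] ⁻¹' s) :=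
        (measure_biUnion_finset h.pairwiseDisjoint_preimage_iterate
          fun i _ => hf.measurable.iterate i hs).symm
    _ ≤ μ univ := measure_mono (subset_univ _)

def firstHitting (f : X → X) (B : Set X) (d : ℕ) : Set X :=
  {x | f^[d] x ∈ B ∧ ∀ k, 0 < k → k < d → f^[k] x ∉ B}

theorem measurableSet_firstHitting [MeasurableSpace X] (hf : Measurable f) (hB : MeasurableSet B)
    (d : ℕ) : MeasurableSet (firstHitting f B d) := by
  simp only [firstHitting, ofPred_and, ofPred_forall]
  exact (hf.iterate d hB).inter <| .iInter fun k => .iInter fun _ => .iInter fun _ =>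
    (hf.iterate k hB).compl

theorem mapsTo_iterate_firstHitting {i : ℕ} (hi : i ≤ d) :
    MapsTo f^[i] (firstHitting f B d) (firstHitting f B (d - i)) := fun x hx =>
  ⟨by rw [← iterate_add_apply, Nat.sub_add_cancel hi]; exact hx.1,
    fun k hk hkd => by rw [← iterate_add_apply]; exact hx.2 _ (by omega) (by omega)⟩

theorem eq_of_mem_firstHitting {e : ℕ} (hd : 0 < d) (he : 0 < e) (hxd : x ∈ firstHitting f B d)
    (hxe : x ∈ firstHitting f B e) : d = e := by
  by_contra hne
  rcases Nat.lt_or_gt_of_ne hne with h | h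
  · exact hxe.2 d hd h hxd.1
  · exact hxd.2 e he h hxe.1

theorem exists_mem_firstHitting (h : ∃ k, 0 < k ∧ f^[k] x ∈ B) :
    ∃ d, 0 < d ∧ x ∈ firstHitting f B d := by
  classical
  exact ⟨Nat.find h, (Nat.find_spec h).1, (Nat.find_spec h).2,
    fun k hk hkd hkB => Nat.find_min h hkd ⟨hk, hkB⟩⟩

def towerBase (f : X → X) (B : Set X) (n : ℕ) : Set X :=
  ⋃ m : ℕ, firstHitting f B (n * (m + 1))

theorem measurableSet_towerBase [MeasurableSpace X] (hf : Measurable f) (hB : MeasurableSet B)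
    (n : ℕ) : MeasurableSet (towerBase f B n) :=
  .iUnion fun _ => measurableSet_firstHitting hf hB _

theorem disjoint_preimage_towerBase {i j : ℕ} (hij : i ≠ j) (hi : i < n) (hj : j < n) :
    Disjoint (f^[i] ⁻¹' towerBase f B n) (f^[j] ⁻¹' towerBase f B n) := by
  wlog h : i < j generalizing i j
  · exact (this hij.symm hj hi (by omega)).symm
  refine disjoint_left.2 fun x hxi hxj => ?_
  obtain ⟨m, hm⟩ := mem_iUnion.1 hxi
  obtain ⟨m', hm'⟩ := mem_iUnion.1 hxj
  set a := n * (m + 1)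
  have ha : n ≤ a := Nat.le_mul_of_pos_right n m.succ_pos
  have hshift : f^[j] x ∈ firstHitting f B (a - (j - i)) := by
    have := mapsTo_iterate_firstHitting (f := f) (B := B) (i := j - i) (by omega) hm
    rwa [← iterate_add_apply, Nat.sub_add_cancel h.le] at this
  have heq := eq_of_mem_firstHitting (Nat.mul_pos (by omega) m'.succ_pos) (by omega) hm' hshift
  have hdvd : n ∣ j - i := by
    rw [show j - i = a - n * (m' + 1) by rw [heq]; omega]
    exact Nat.dvd_sub (dvd_mul_right n _) (dvd_mul_right n _)
  exact absurd (Nat.eq_zero_of_dvd_of_lt hdvd (by omega)) (by omega)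

theorem exists_iterate_mem_towerBase (hn : 0 < n) (hhit : ∃ k, 0 < k ∧ f^[k] x ∈ B)
    (hx : ∀ k, 0 < k → k < n → f^[k] x ∉ B) : ∃ i < n, f^[i] x ∈ towerBase f B n := by
  obtain ⟨d, hd, hxd⟩ := exists_mem_firstHitting hhit
  have hnd : n ≤ d := by
    by_contra! h
    exact hx d hd h hxd.1
  refine ⟨d % n, Nat.mod_lt d hn, mem_iUnion.2 ⟨d / n - 1, ?_⟩⟩
  have hq : n * (d / n - 1 + 1) = d - d % n := by
    rw [Nat.sub_add_cancel (Nat.div_pos hnd hn)]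
    exact (Nat.sub_eq_of_eq_add (Nat.div_add_mod d n).symm).symm
  rw [hq]
  exact mapsTo_iterate_firstHitting (Nat.mod_le d n) hxd

theorem measure_compl_iUnion_preimage_towerBase_le {_ : MeasurableSpace X} {μ : Measure X}
    (hf : MeasurePreserving f μ μ) (hB : MeasurableSet B)
    (hhit : ∀ᵐ x ∂μ, ∃ k, 0 < k ∧ f^[k] x ∈ B) (hn : 0 < n) :
    μ (⋃ i ∈ Finset.range n, f^[i] ⁻¹' towerBase f B n)ᶜ ≤ n * μ B := by
  have hsub : (⋃ i ∈ Finset.range n, f^[i] ⁻¹' towerBase f B n)ᶜ ≤ᵐ[μ]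
      ⋃ k ∈ Finset.range n, f^[k] ⁻¹' B := by
    filter_upwards [hhit] with x hx hxc
    by_contra hxB
    obtain ⟨i, hi, hxi⟩ := exists_iterate_mem_towerBase hn hx fun k _ hk hkB =>
      hxB (mem_biUnion (Finset.mem_range.2 hk) hkB)
    exact hxc (mem_biUnion (Finset.mem_range.2 hi) hxi)
  calc μ (⋃ i ∈ Finset.range n, f^[i] ⁻¹' towerBase f B n)ᶜ
      ≤ μ (⋃ k ∈ Finset.range n, f^[k] ⁻¹' B) := measure_mono_ae hsub
    _ ≤ ∑ k ∈ Finset.range n, μ (f^[k] ⁻¹' B) := measure_biUnion_finset_le _ _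
    _ = n * μ B := by simp [(hf.iterate _).measure_preimage hB.nullMeasurableSet]

theorem exists_seq_noReturnBefore_cover [MeasurableSpace X]
    [MeasurableSpace.CountablySeparated X] (hf : Measurable f) (N : ℕ) :
    ∃ D : ℕ → Set X, (∀ k, MeasurableSet (D k)) ∧ (∀ k, NoReturnBefore f N (D k)) ∧
      {x | ∀ i, 0 < i → i < N → f^[i] x ≠ x} ⊆ ⋃ k, D k := by
  obtain ⟨g, hgm, hgi⟩ := MeasurableSpace.measurable_injection_nat_bool_of_countablySeparated X
  let C : ℕ × Bool → Set X := fun p => {y | g y p.1 = p.2}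
  have hC : ∀ p, MeasurableSet (C p) := fun p =>
    ((measurable_pi_apply p.1).comp hgm) (measurableSet_singleton p.2)
  -- the sets `C p` separate points; on `E φ`, `C (φ i)` separates `x` from `f^[i] x`
  let E : (Fin N → ℕ × Bool) → Set X := fun φ =>
    ⋂ i : Fin N, ⋂ (_ : 0 < (i : ℕ)), C (φ i) \ f^[i] ⁻¹' C (φ i)
  obtain ⟨e, he⟩ := exists_surjective_nat (Fin N → ℕ × Bool)
  refine ⟨E ∘ e, fun k => ?_, fun k x hx i hi hiN hfx => ?_, fun x hx => ?_⟩
  · exact .iInter fun i => .iInter fun _ => (hC _).diff (hf.iterate _ (hC _))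
  · exact (mem_iInter₂.1 hx ⟨i, hiN⟩ hi).2 (mem_iInter₂.1 hfx ⟨i, hiN⟩ hi).1
  · have hsep : ∀ i : Fin N, ∃ p, 0 < (i : ℕ) → x ∈ C p \ f^[i] ⁻¹' C p := by
      intro i
      by_cases hi : 0 < (i : ℕ)
      · obtain ⟨m, hm⟩ := Function.ne_iff.1 fun h => hx i hi i.2 (hgi h)
        exact ⟨(m, g x m), fun _ => ⟨rfl, hm⟩⟩
      · exact ⟨(0, true), fun h => absurd h hi⟩
    choose φ hφ using hsep
    obtain ⟨k, rfl⟩ := he φ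
    exact mem_iUnion.2 ⟨k, mem_iInter₂.2 fun i hi => hφ i hi⟩

section Orbit

variable [MeasurableSpace X] (T : X ≃ᵐ X)

theorem iterate_apply_iterate_symm (j : ℕ) (x : X) : T^[j] (T.symm^[j] x) = x :=
  RightInverse.iterate (g := T.symm) T.apply_symm_apply j x

theorem image_iterate_eq_preimage_iterate_symm (j : ℕ) (s : Set X) :
    T^[j] '' s = T.symm^[j] ⁻¹' s :=
  congrFun (image_eq_preimage_of_inverse (LeftInverse.iterate T.symm_apply_apply j)
    (RightInverse.iterate (g := T.symm) T.apply_symm_apply j)) s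

theorem measurable_toEquiv_zpow (i : ℤ) : Measurable ⇑(T.toEquiv ^ i) := by
  induction i using Int.induction_on with
  | zero => exact measurable_id
  | succ i ih => rw [zpow_add_one]; exact ih.comp T.measurable
  | pred i ih => rw [zpow_sub_one]; exact ih.comp T.symm.measurable

theorem toEquiv_zpow_natCast_apply (j : ℕ) (x : X) : (T.toEquiv ^ (j : ℤ)) x = T^[j] x := by
  rw [zpow_natCast, Equiv.Perm.coe_pow]; rfl

theorem toEquiv_zpow_neg_natCast_apply (j : ℕ) (x : X) :
    (T.toEquiv ^ (-(j : ℤ))) x = T.symm^[j] x := by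
  rw [zpow_neg, zpow_natCast, ← inv_pow, Equiv.Perm.coe_pow]; rfl

def orbitSaturation (E : Set X) : Set X := {x | ∃ y ∈ E, Equiv.Perm.SameCycle T.toEquiv x y}

variable {T} {E : Set X}

theorem orbitSaturation_eq_iUnion_preimage (E : Set X) :
    orbitSaturation T E = ⋃ i : ℤ, ⇑(T.toEquiv ^ i) ⁻¹' E := by
  ext x
  simp [orbitSaturation, Equiv.Perm.SameCycle]

theorem measurableSet_orbitSaturation (hE : MeasurableSet E) :
    MeasurableSet (orbitSaturation T E) := by
  rw [orbitSaturation_eq_iUnion_preimage]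
  exact .iUnion fun i => measurable_toEquiv_zpow T i hE

theorem subset_orbitSaturation : E ⊆ orbitSaturation T E := fun x hx => ⟨x, hx, .refl _ _⟩

theorem exists_noReturnBefore_subset_orbitSaturation {D : ℕ → Set X}
    (hDm : ∀ k, MeasurableSet (D k)) (hD : ∀ k, NoReturnBefore T N (D k)) :
    ∃ B, MeasurableSet B ∧ NoReturnBefore T N B ∧ ⋃ k, D k ⊆ orbitSaturation T B := by
  classical
  refine ⟨⋃ k, D k \ orbitSaturation T (⋃ j < k, D j), .iUnion fun k => (hDm k).diff
    (measurableSet_orbitSaturation (.iUnion fun j => .iUnion fun _ => hDm j)), ?_, ?_⟩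
  · intro x hx i hi hiN hTx
    obtain ⟨k, hxk, hxk'⟩ := mem_iUnion.1 hx
    obtain ⟨l, hl, hl'⟩ := mem_iUnion.1 hTx
    have hsame : Equiv.Perm.SameCycle T.toEquiv x (T^[i] x) :=
      ⟨i, toEquiv_zpow_natCast_apply T i x⟩
    rcases lt_trichotomy k l with h | rfl | h
    · exact hl' ⟨x, mem_iUnion₂.2 ⟨k, h, hxk⟩, hsame.symm⟩
    · exact hD k x hxk i hi hiN hl
    · exact hxk' ⟨T^[i] x, mem_iUnion₂.2 ⟨l, h, hl⟩, hsame⟩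
  · intro x hx
    have hex : ∃ k, x ∈ orbitSaturation T (D k) :=
      (mem_iUnion.1 hx).imp fun k hk => subset_orbitSaturation hk
    obtain ⟨y, hy, hxy⟩ := Nat.find_spec hex
    refine ⟨y, mem_iUnion.2 ⟨Nat.find hex, hy, ?_⟩, hxy⟩
    rintro ⟨z, hz, hyz⟩
    obtain ⟨j, hj, hzj⟩ := mem_iUnion₂.1 hz
    exact Nat.find_min hex hj ⟨z, hzj, hxy.trans hyz⟩

theorem ae_exists_iterate_mem_of_mem_orbitSaturation {μ : Measure X} [IsFiniteMeasure μ]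
    (hT : MeasurePreserving T μ μ) (hB : MeasurableSet B) :
    ∀ᵐ x ∂μ, x ∈ orbitSaturation T B → ∃ k, 0 < k ∧ T^[k] x ∈ B := by
  have hrec : ∀ j : ℕ, ∀ᵐ x ∂μ, T.symm^[j] x ∈ B → ∃ᶠ m in atTop, T^[m] (T.symm^[j] x) ∈ B :=
    fun j => ((hT.symm T).iterate j).quasiMeasurePreserving.ae
      (hT.conservative.ae_mem_imp_frequently_image_mem hB.nullMeasurableSet)
  filter_upwards [ae_all_iff.2 hrec] with x hx
  -- Poincaré recurrence at the point `T.symm^[j] x` of `B`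
  have hpast : ∀ j, T.symm^[j] x ∈ B → ∃ k, 0 < k ∧ T^[k] x ∈ B := by
    intro j hj
    obtain ⟨m, hmB, hjm⟩ := ((hx j hj).and_eventually (eventually_gt_atTop j)).exists
    refine ⟨m - j, by omega, ?_⟩
    rwa [show m = (m - j) + j by omega, iterate_add_apply,
      iterate_apply_iterate_symm] at hmB
  rintro ⟨y, hyB, i, rfl⟩
  obtain ⟨j, rfl | rfl⟩ := i.eq_nat_or_neg
  · rw [toEquiv_zpow_natCast_apply] at hyB
    rcases j.eq_zero_or_pos with rfl | hj
    · exact hpast 0 hyB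
    · exact ⟨j, hj, hyB⟩
  · exact hpast j (by rwa [toEquiv_zpow_neg_natCast_apply] at hyB)

end Orbit

section Tower

variable [MeasurableSpace X] {T : X ≃ᵐ X} {μ : Measure X} [IsFiniteMeasure μ]

theorem exists_noReturnBefore_ae_exists_iterate_mem [MeasurableSpace.CountablySeparated X]
    (hT : MeasurePreserving T μ μ) (hap : ∀ᵐ x ∂μ, ∀ k, 0 < k → T^[k] x ≠ x) (N : ℕ) :
    ∃ B, MeasurableSet B ∧ NoReturnBefore T N B ∧ ∀ᵐ x ∂μ, ∃ k, 0 < k ∧ T^[k] x ∈ B := by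
  obtain ⟨D, hDm, hD, hcover⟩ := exists_seq_noReturnBefore_cover T.measurable N
  obtain ⟨B, hBm, hB, hDB⟩ := exists_noReturnBefore_subset_orbitSaturation hDm hD
  refine ⟨B, hBm, hB, ?_⟩
  filter_upwards [hap, ae_exists_iterate_mem_of_mem_orbitSaturation hT hBm] with x hx hrec
  exact hrec (hDB (hcover fun k hk _ => hx k hk))

theorem exists_disjoint_preimage_iterate_measure_compl_lt [MeasurableSpace.CountablySeparated X]
    (hT : MeasurePreserving T μ μ) (hap : ∀ᵐ x ∂μ, ∀ k, 0 < k → T^[k] x ≠ x) (hn : 0 < n)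
    {ε : ℝ≥0∞} (hε : ε ≠ 0) :
    ∃ A, MeasurableSet A ∧
      (∀ i j, i < n → j < n → i ≠ j → Disjoint (T^[i] ⁻¹' A) (T^[j] ⁻¹' A)) ∧
      μ (⋃ i ∈ Finset.range n, T^[i] ⁻¹' A)ᶜ < ε := by
  have hfin : (n : ℝ≥0∞) * μ univ ≠ ⊤ :=
    ENNReal.mul_ne_top (ENNReal.natCast_ne_top n) (measure_ne_top μ univ)
  obtain ⟨N, hN⟩ := ENNReal.exists_nat_gt (ENNReal.div_ne_top hfin hε)
  have hN0 : (N : ℝ≥0∞) ≠ 0 := (zero_le.trans_lt hN).ne'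
  obtain ⟨B, hBm, hB, hhit⟩ := exists_noReturnBefore_ae_exists_iterate_mem hT hap N
  refine ⟨towerBase T B n, measurableSet_towerBase T.measurable hBm n,
    fun i j hi hj hij => disjoint_preimage_towerBase hij hi hj, ?_⟩
  calc μ (⋃ i ∈ Finset.range n, T^[i] ⁻¹' towerBase T B n)ᶜ
      ≤ n * μ B := measure_compl_iUnion_preimage_towerBase_le hT hBm hhit hn
    _ ≤ n * μ univ / N := by
        rw [ENNReal.le_div_iff_mul_le (Or.inl hN0) (Or.inl (ENNReal.natCast_ne_top N)), mul_assoc,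
          mul_comm (μ B)]
        gcongr
        exact hB.natCast_mul_measure_le hT hBm
    _ < ε := by
        rw [ENNReal.div_lt_iff (Or.inl hN0) (Or.inl (ENNReal.natCast_ne_top N)), mul_comm ε]
        exact (ENNReal.div_lt_iff (Or.inl hε) (Or.inr hfin)).1 hN

end Tower

end Rokhlin

theorem stmt_9_general {X : Type*} [MeasurableSpace X] [StandardBorelSpace X]
    (μ : Measure X) [IsProbabilityMeasure μ]
    (T : X ≃ᵐ X) (hTμ : MeasurePreserving (T : X → X) μ μ)
    (hap : μ {x : X | ∃ n : ℕ, 1 ≤ n ∧ (T : X → X)^[n] x = x} = 0)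
    (n : ℕ) (hn : 1 ≤ n) (ε : ℝ) (hε : 0 < ε) :
    ∃ A : Set X, MeasurableSet A ∧
      (∀ i j : ℕ, i < n → j < n → i ≠ j →
        Disjoint ((T : X → X)^[i] '' A) ((T : X → X)^[j] '' A)) ∧
      μ (Set.univ \ ⋃ i ∈ Finset.range n, (T : X → X)^[i] '' A) < ENNReal.ofReal ε := by
  have hapSymm : ∀ᵐ x ∂μ, ∀ k, 0 < k → T.symm^[k] x ≠ x := by
    filter_upwards [measure_eq_zero_iff_ae_notMem.1 hap] with x hx k hk hkx
    exact hx ⟨k, hk, (congrArg T^[k] hkx).symm.trans (Rokhlin.iterate_apply_iterate_symm T k x)⟩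
  simp_rw [Rokhlin.image_iterate_eq_preimage_iterate_symm, ← compl_eq_univ_sdiff]
  exact Rokhlin.exists_disjoint_preimage_iterate_measure_compl_lt (hTμ.symm T) hapSymm hn
    (ENNReal.ofReal_pos.2 hε).ne'

/-- **Rokhlin's lemma.** Let `μ` be a nonatomic Borel probability measure on a standard
Borel space and `T` an aperiodic `μ`-preserving Borel automorphism. Then for every
`n ≥ 1` and `ε > 0` there is a Borel set `A` with `A, T A, …, T^{n-1} A` pairwise
disjoint and `μ(X \ (A ∪ T A ∪ ⋯ ∪ T^{n-1} A)) < ε`. -/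
theorem stmt_9 {X : Type*} [MeasurableSpace X] [StandardBorelSpace X]
    (μ : Measure X) [IsProbabilityMeasure μ] [NullSingletonClass μ]
    (T : X ≃ᵐ X) (hTμ : MeasurePreserving (T : X → X) μ μ)
    (hap : μ {x : X | ∃ n : ℕ, 1 ≤ n ∧ (T : X → X)^[n] x = x} = 0)
    (n : ℕ) (hn : 1 ≤ n) (ε : ℝ) (hε : 0 < ε) :
    ∃ A : Set X, MeasurableSet A ∧
      (∀ i j : ℕ, i < n → j < n → i ≠ j →
        Disjoint ((T : X → X)^[i] '' A) ((T : X → X)^[j] '' A)) ∧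
      μ (Set.univ \ ⋃ i ∈ Finset.range n, (T : X → X)^[i] '' A) < ENNReal.ofReal ε :=
  stmt_9_general μ T hTμ hap n hn ε hε
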